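/- arXiv:2003.14087 — 4 statements merged into one kernel-verified Lean document; each statement's English description precedes it below -/
import Mathlib

section
/- Let W_{N+1}(ε), …, W_1(ε) be the Kleinrock accumulating-priority expected waiting times defined by the downward recursion. Then for every class i ∈ {1, …, N+1}, lim_{ε ↓ 0} ε · W_i(ε) = (1/b_i) / (Σ_{k=1}^{N+1} λ_k/b_k). -/
open Filter Topology Finset

/-!
Multiplying the recursion by `ε` gives an upper-triangular system for `ε W_i(ε)` whose
coefficients converge and whose diagonal tends to
`D_i = 1 - ∑_{k ≤ i} λ_k (1 - b_i / b_k) = ∑_{k > i} λ_k + b_i ∑_{k ≤ i} λ_k / b_k > 0`,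
so by downward induction on `i` the solutions converge to the solution of the limiting
system. That solution is `w_i = (1 / b_i) / ∑_k λ_k / b_k`: with
`f_k = λ_k (1 / b_i - 1 / b_k)`, the limiting equation for `w_i` reduces to
`∑_k f_k = 1 / b_i - ∑_k λ_k / b_k`, which is `∑_k λ_k = 1`.
-/

theorem Finset.sum_Iic_add_sum_Ioi {ι M : Type*} [LinearOrder ι] [Fintype ι]
    [LocallyFiniteOrderBot ι] [LocallyFiniteOrderTop ι] [AddCommMonoid M]
    (f : ι → M) (i : ι) :
    ∑ k ∈ Iic i, f k + ∑ k ∈ Ioi i, f k = ∑ k, f k := by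
  rw [← sum_union (disjoint_left.2 fun k hk hk' => (mem_Iic.1 hk).not_gt (mem_Ioi.1 hk'))]
  congr
  ext k
  simp [le_or_gt]

theorem tendsto_of_eventually_eq_div_of_triangular {α ι : Type*} [Preorder ι]
    [LocallyFiniteOrderTop ι] [WellFoundedGT ι] {l : Filter α} {x u d : α → ι → ℝ}
    {a : α → ι → ι → ℝ} {u₀ d₀ v : ι → ℝ} {a₀ : ι → ι → ℝ}
    (hx : ∀ i, ∀ᶠ t in l, x t i = (u t i - ∑ k ∈ Ioi i, a t i k * x t k) / d t i)
    (hu : ∀ i, Tendsto (u · i) l (𝓝 (u₀ i)))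
    (ha : ∀ i k, Tendsto (a · i k) l (𝓝 (a₀ i k)))
    (hd : ∀ i, Tendsto (d · i) l (𝓝 (d₀ i))) (hd₀ : ∀ i, d₀ i ≠ 0)
    (hv : ∀ i, v i = (u₀ i - ∑ k ∈ Ioi i, a₀ i k * v k) / d₀ i) (i : ι) :
    Tendsto (x · i) l (𝓝 (v i)) := by
  induction i using WellFoundedGT.induction with
  | _ i ih =>
    have hsum : Tendsto (fun t => ∑ k ∈ Ioi i, a t i k * x t k) l
        (𝓝 (∑ k ∈ Ioi i, a₀ i k * v k)) :=
      tendsto_finsetSum _ fun k hk => (ha i k).mul (ih k (mem_Ioi.1 hk))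
    rw [hv i]
    exact (((hu i).sub hsum).div (hd i) (hd₀ i)).congr' <| (hx i).mono fun t ht => ht.symm

section Kleinrock

variable {ι : Type*} [LinearOrder ι] [Fintype ι] [LocallyFiniteOrderBot ι]
  [LocallyFiniteOrderTop ι] {lam b : ι → ℝ}

theorem one_sub_sum_Iic_mul_one_sub_div_pos (hlam : ∀ k, 0 < lam k) (hb : ∀ k, 0 < b k)
    (hlam_sum : ∑ k, lam k = 1) (i : ι) :
    0 < 1 - ∑ k ∈ Iic i, lam k * (1 - b i / b k) := by
  have hsplit : 1 - ∑ k ∈ Iic i, lam k * (1 - b i / b k) =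
      ∑ k ∈ Iic i, lam k * (b i / b k) + ∑ k ∈ Ioi i, lam k := by
    simp only [mul_sub, mul_one, sum_sub_distrib]
    linear_combination -((sum_Iic_add_sum_Ioi lam i).trans hlam_sum)
  rw [hsplit]
  refine add_pos_of_pos_of_nonneg ?_ (sum_nonneg fun k _ => (hlam k).le)
  exact sum_pos (fun k _ => mul_pos (hlam k) (div_pos (hb i) (hb k))) ⟨i, mem_Iic.2 le_rfl⟩

theorem one_div_div_sum_div_mul_one_sub_sum_Iic_eq (hb : ∀ k, b k ≠ 0)
    (hS : ∑ k, lam k / b k ≠ 0) (hlam_sum : ∑ k, lam k = 1) (i : ι) :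
    1 / b i / (∑ k, lam k / b k) * (1 - ∑ k ∈ Iic i, lam k * (1 - b i / b k)) =
      1 - ∑ k ∈ Ioi i, lam k * (1 - b k / b i) * (1 / b k / ∑ k, lam k / b k) := by
  set S := ∑ k, lam k / b k
  set f : ι → ℝ := fun k => lam k * (1 / b i - 1 / b k)
  have hf : b i * (∑ k ∈ Iic i, f k + ∑ k ∈ Ioi i, f k) = 1 - b i * S := by
    rw [sum_Iic_add_sum_Ioi]
    simp only [f, mul_sub, sum_sub_distrib, mul_one_div, ← sum_div, hlam_sum, S]
    field_simp [hb i]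
  have hlow : ∑ k ∈ Iic i, lam k * (1 - b i / b k) = b i * ∑ k ∈ Iic i, f k := by
    rw [mul_sum]
    refine sum_congr rfl fun k _ => ?_
    simp only [f]
    field_simp [hb i, hb k]
  have hhigh : ∑ k ∈ Ioi i, lam k * (1 - b k / b i) * (1 / b k / S) =
      -(∑ k ∈ Ioi i, f k) / S := by
    rw [neg_div, sum_div, ← sum_neg_distrib]
    refine sum_congr rfl fun k _ => ?_
    simp only [f]
    field_simp [hb i, hb k]
    ring
  rw [hlow, hhigh]
  field_simp [hb i]
  linear_combination -hf

end Kleinrock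

theorem accumulating_priority_heavy_traffic_waiting_time_general
    (N : ℕ) (b : Fin (N + 1) → ℝ)
    (hb_pos : ∀ i, 0 < b i)
    (lam : ℝ → Fin (N + 1) → ℝ) (lamLim : Fin (N + 1) → ℝ)
    (hlamLim_pos : ∀ i, 0 < lamLim i)
    (hlamLim_sum : ∑ i, lamLim i = 1)
    (hlam_tendsto : ∀ i, Tendsto (fun ε => lam ε i) (𝓝[>] (0 : ℝ)) (𝓝 (lamLim i)))
    (W : ℝ → Fin (N + 1) → ℝ)
    (hW : ∀ ε ∈ Set.Ioo (0 : ℝ) 1, ∀ i,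
      W ε i = (1 / ε - 1 - ∑ k ∈ Finset.Ioi i, lam ε k * (1 - b k / b i) * W ε k) /
        (1 - ∑ k ∈ Finset.Iic i, lam ε k * (1 - b i / b k))) :
    ∀ i, Tendsto (fun ε => ε * W ε i) (𝓝[>] (0 : ℝ))
      (𝓝 ((1 / b i) / ∑ k, lamLim k / b k)) := by
  have hrec (i) : ∀ᶠ ε in 𝓝[>] (0 : ℝ), ε * W ε i =
      (1 - ε - ∑ k ∈ Ioi i, lam ε k * (1 - b k / b i) * (ε * W ε k)) /
        (1 - ∑ k ∈ Iic i, lam ε k * (1 - b i / b k)) := by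
    filter_upwards [Ioo_mem_nhdsGT one_pos] with ε hε
    rw [hW ε hε i, mul_div_assoc', mul_sub, mul_sub, mul_one_div_cancel hε.1.ne', mul_one,
      mul_sum]
    congr 3 with k
    ring
  have hden_pos := one_sub_sum_Iic_mul_one_sub_div_pos hlamLim_pos hb_pos hlamLim_sum
  have hS : ∑ k, lamLim k / b k ≠ 0 :=
    (sum_pos (fun k _ => div_pos (hlamLim_pos k) (hb_pos k)) univ_nonempty).ne'
  refine tendsto_of_eventually_eq_div_of_triangular hrec (u₀ := fun _ => 1)
    (fun _ => by
      simpa using (tendsto_id.const_sub (1 : ℝ)).mono_left (nhdsWithin_le_nhds (a := 0)))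
    (fun _ k => (hlam_tendsto k).mul_const _)
    (fun _ => tendsto_const_nhds.sub (tendsto_finsetSum _ fun k _ => (hlam_tendsto k).mul_const _))
    (fun i => (hden_pos i).ne') fun i => (eq_div_iff (hden_pos i).ne').2 ?_
  exact one_div_div_sum_div_mul_one_sub_sum_Iic_eq (fun k => (hb_pos k).ne') hS hlamLim_sum i

/-- **Heavy-traffic limit for the Kleinrock accumulating-priority queue.**
Fix `N ≥ 0`, accumulation rates `b 0 > b 1 > … > b N > 0` (class `i+1` of the paper is
index `i`), and for each `ε ∈ (0,1)` positive arrival rates `lam ε i` summing to `1 - ε`,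
converging to positive limits `lamLim i` (summing to `1`) as `ε ↓ 0`.  If `W ε` satisfies
the Kleinrock downward recursion, then for every class `i`,
`ε * W ε i → (1 / b i) / (∑ k, lamLim k / b k)` as `ε ↓ 0`. -/
theorem accumulating_priority_heavy_traffic_waiting_time
    (N : ℕ) (b : Fin (N + 1) → ℝ)
    (hb_pos : ∀ i, 0 < b i) (hb_anti : StrictAnti b)
    (lam : ℝ → Fin (N + 1) → ℝ) (lamLim : Fin (N + 1) → ℝ)
    (hlam_pos : ∀ ε ∈ Set.Ioo (0 : ℝ) 1, ∀ i, 0 < lam ε i)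
    (hlam_sum : ∀ ε ∈ Set.Ioo (0 : ℝ) 1, ∑ i, lam ε i = 1 - ε)
    (hlamLim_pos : ∀ i, 0 < lamLim i)
    (hlamLim_sum : ∑ i, lamLim i = 1)
    (hlam_tendsto : ∀ i, Tendsto (fun ε => lam ε i) (𝓝[>] (0 : ℝ)) (𝓝 (lamLim i)))
    (W : ℝ → Fin (N + 1) → ℝ)
    (hW : ∀ ε ∈ Set.Ioo (0 : ℝ) 1, ∀ i,
      W ε i = (1 / ε - 1 - ∑ k ∈ Finset.Ioi i, lam ε k * (1 - b k / b i) * W ε k) /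
        (1 - ∑ k ∈ Finset.Iic i, lam ε k * (1 - b i / b k))) :
    ∀ i, Tendsto (fun ε => ε * W ε i) (𝓝[>] (0 : ℝ))
      (𝓝 ((1 / b i) / ∑ k, lamLim k / b k)) :=
  accumulating_priority_heavy_traffic_waiting_time_general N b hb_pos lam lamLim hlamLim_pos
    hlamLim_sum hlam_tendsto W hW
end

section
/- Fix j ∈ {1, …, N} and let S = Σ_{k=1}^{N+1} λ_k/b_k. Suppose that for every k ∈ {j+1, …, N+1} the limits lim_{ε ↓ 0} ε · W_k(ε) = (1/b_k)/S hold. Then also lim_{ε ↓ 0} ε · W_j(ε) = (1/b_j)/S, where W_j(ε) = (1/ε − 1 − Σ_{k=j+1}^{N+1} λ_k(ε)(1 − b_k/b_j) W_k(ε)) / (1 − Σ_{k=1}^{j} λ_k(ε)(1 − b_j/b_k)). -/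
/-!
Multiplying the Kleinrock formula by `ε` writes `ε * W ε j` as a quotient. By the induction
hypothesis its numerator `1 - ε - ∑_{k > j} λ_k(ε) (1 - b_k / b_j) ε W_k(ε)` tends to
`1 - ∑_{k > j} λ_k (1 - b_k / b_j) / (b_k S)`, and its denominator tends to
`1 - ∑_{k ≤ j} λ_k (1 - b_j / b_k) = ∑_{k > j} λ_k + b_j ∑_{k ≤ j} λ_k / b_k > 0`.
Since `∑ λ_k = 1` and `S = ∑ λ_k / b_k`, the limiting numerator is exactly `1 / (b_j S)` times
the limiting denominator.
-/

open Filter Topology Finset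

theorem Finset.compl_Iic_eq_Ioi {α : Type*} [Fintype α] [LinearOrder α]
    [LocallyFiniteOrderBot α] [LocallyFiniteOrderTop α] (a : α) :
    (Iic a)ᶜ = Ioi a := by
  ext
  simp

section KleinrockAlgebra

variable {ι : Type*} (lam b : ι → ℝ)

theorem sum_mul_one_sub_div (s : Finset ι) (c : ℝ) :
    ∑ k ∈ s, lam k * (1 - c / b k) = ∑ k ∈ s, lam k - c * ∑ k ∈ s, lam k / b k := by
  rw [mul_sum, ← sum_sub_distrib]
  exact sum_congr rfl fun k _ => by ring

theorem one_sub_sum_mul_one_sub_div_pos [Fintype ι] [DecidableEq ι] {s : Finset ι}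
    (hs : s.Nonempty) (hlam : ∀ i, 0 < lam i) (hlam_sum : ∑ i, lam i = 1) (hb : ∀ i, 0 < b i)
    {c : ℝ} (hc : 0 < c) : 0 < 1 - ∑ k ∈ s, lam k * (1 - c / b k) := by
  have hcompl : 0 ≤ ∑ k ∈ sᶜ, lam k := sum_nonneg fun k _ => (hlam k).le
  have hs_pos : 0 < ∑ k ∈ s, lam k / b k := sum_pos (fun k _ => div_pos (hlam k) (hb k)) hs
  rw [sum_mul_one_sub_div, ← hlam_sum, ← sum_add_sum_compl s lam]
  linarith [mul_pos hc hs_pos]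

theorem one_sub_sum_compl_eq_mul [Fintype ι] [DecidableEq ι] (s : Finset ι)
    (hlam_sum : ∑ i, lam i = 1) (hb : ∀ i, b i ≠ 0) {c : ℝ} (hc : c ≠ 0)
    (hS : ∑ i, lam i / b i ≠ 0) :
    1 - ∑ k ∈ sᶜ, lam k * (1 - b k / c) * (1 / b k / ∑ i, lam i / b i) =
      1 / c / (∑ i, lam i / b i) * (1 - ∑ k ∈ s, lam k * (1 - c / b k)) := by
  have hS_split := sum_add_sum_compl s fun i => lam i / b i
  have hlam_split := sum_add_sum_compl s lam
  set S := ∑ i, lam i / b i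
  have hterm : ∀ k, lam k * (1 - b k / c) * (1 / b k / S) = (lam k / b k - lam k / c) / S := by
    intro k
    field_simp [hb k]
  rw [sum_congr rfl fun k _ => hterm k, ← sum_div, sum_sub_distrib, ← sum_div,
    sum_mul_one_sub_div]
  field_simp
  linear_combination hlam_split + hlam_sum - c * hS_split

end KleinrockAlgebra

theorem accumulating_priority_heavy_traffic_induction_step_general
    (N : ℕ) (b : Fin (N + 1) → ℝ)
    (hb_pos : ∀ i, 0 < b i)
    (lam : ℝ → Fin (N + 1) → ℝ) (lamLim : Fin (N + 1) → ℝ)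
    (hlamLim_pos : ∀ i, 0 < lamLim i)
    (hlamLim_sum : ∑ i, lamLim i = 1)
    (hlam_tendsto : ∀ i, Tendsto (fun ε => lam ε i) (𝓝[>] (0 : ℝ)) (𝓝 (lamLim i)))
    (j : Fin (N + 1))
    (W : ℝ → Fin (N + 1) → ℝ)
    (hind : ∀ k, j < k → Tendsto (fun ε => ε * W ε k) (𝓝[>] (0 : ℝ))
      (𝓝 ((1 / b k) / ∑ i, lamLim i / b i)))
    (hWj : ∀ ε ∈ Set.Ioo (0 : ℝ) 1,
      W ε j = (1 / ε - 1 - ∑ k ∈ Finset.Ioi j, lam ε k * (1 - b k / b j) * W ε k) /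
        (1 - ∑ k ∈ Finset.Iic j, lam ε k * (1 - b j / b k))) :
    Tendsto (fun ε => ε * W ε j) (𝓝[>] (0 : ℝ))
      (𝓝 ((1 / b j) / ∑ i, lamLim i / b i)) := by
  set S := ∑ i, lamLim i / b i
  have hS : 0 < S := sum_pos (fun i _ => div_pos (hlamLim_pos i) (hb_pos i)) univ_nonempty
  have hden := tendsto_const_nhds (x := (1 : ℝ)).sub <| tendsto_finsetSum (Iic j) fun k _ =>
    (hlam_tendsto k).mul (tendsto_const_nhds (x := 1 - b j / b k))
  have hnum :=
    (tendsto_const_nhds (x := (1 : ℝ)).sub (tendsto_id.mono_left nhdsWithin_le_nhds)).sub <|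
    tendsto_finsetSum (Ioi j) fun k hk =>
      ((hlam_tendsto k).mul (tendsto_const_nhds (x := 1 - b k / b j))).mul (hind k (mem_Ioi.mp hk))
  have hdenLim := one_sub_sum_mul_one_sub_div_pos lamLim b (nonempty_Iic (a := j)) hlamLim_pos
    hlamLim_sum hb_pos (hb_pos j)
  have hnumLim := one_sub_sum_compl_eq_mul lamLim b (Iic j) hlamLim_sum (fun i => (hb_pos i).ne')
    (hb_pos j).ne' hS.ne'
  rw [sub_zero] at hnum
  rw [compl_Iic_eq_Ioi] at hnumLim
  have hmul_Wj : (fun ε => ε * W ε j) =ᶠ[𝓝[>] 0]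
      fun ε => (1 - ε - ∑ k ∈ Ioi j, lam ε k * (1 - b k / b j) * (ε * W ε k)) /
        (1 - ∑ k ∈ Iic j, lam ε k * (1 - b j / b k)) := by
    filter_upwards [Ioo_mem_nhdsGT (zero_lt_one' ℝ)] with ε hε
    rw [hWj ε hε, mul_div_assoc', mul_sub, mul_sub, mul_one_div_cancel hε.1.ne', mul_one,
      mul_sum]
    congr 3 with k
    ring
  refine (tendsto_congr' hmul_Wj).2 ?_
  have hquot := hnum.div hden hdenLim.ne'
  rwa [hnumLim, mul_div_cancel_right₀ _ hdenLim.ne'] at hquot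

/-- **Induction step of the heavy-traffic limit for the Kleinrock accumulating-priority
queue.**  Fix a class `j` (not the lowest one).  If for every lower-priority class
`k > j` the limit `ε * W ε k → (1 / b k) / S` (with `S = ∑ k, lamLim k / b k`) holds,
and `W ε j` is given by the Kleinrock formula (whose denominator is strictly positive),
then also `ε * W ε j → (1 / b j) / S` as `ε ↓ 0`. -/
theorem accumulating_priority_heavy_traffic_induction_step
    (N : ℕ) (b : Fin (N + 1) → ℝ)
    (hb_pos : ∀ i, 0 < b i) (hb_anti : StrictAnti b)
    (lam : ℝ → Fin (N + 1) → ℝ) (lamLim : Fin (N + 1) → ℝ)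
    (hlam_pos : ∀ ε ∈ Set.Ioo (0 : ℝ) 1, ∀ i, 0 < lam ε i)
    (hlam_sum : ∀ ε ∈ Set.Ioo (0 : ℝ) 1, ∑ i, lam ε i = 1 - ε)
    (hlamLim_pos : ∀ i, 0 < lamLim i)
    (hlamLim_sum : ∑ i, lamLim i = 1)
    (hlam_tendsto : ∀ i, Tendsto (fun ε => lam ε i) (𝓝[>] (0 : ℝ)) (𝓝 (lamLim i)))
    (j : Fin (N + 1)) (hj : j ≠ Fin.last N)
    (W : ℝ → Fin (N + 1) → ℝ)
    (hind : ∀ k, j < k → Tendsto (fun ε => ε * W ε k) (𝓝[>] (0 : ℝ))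
      (𝓝 ((1 / b k) / ∑ i, lamLim i / b i)))
    (hden_pos : ∀ ε ∈ Set.Ioo (0 : ℝ) 1,
      0 < 1 - ∑ k ∈ Finset.Iic j, lam ε k * (1 - b j / b k))
    (hWj : ∀ ε ∈ Set.Ioo (0 : ℝ) 1,
      W ε j = (1 / ε - 1 - ∑ k ∈ Finset.Ioi j, lam ε k * (1 - b k / b j) * W ε k) /
        (1 - ∑ k ∈ Finset.Iic j, lam ε k * (1 - b j / b k))) :
    Tendsto (fun ε => ε * W ε j) (𝓝[>] (0 : ℝ))
      (𝓝 ((1 / b j) / ∑ i, lamLim i / b i)) :=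
  accumulating_priority_heavy_traffic_induction_step_general N b hb_pos lam lamLim hlamLim_pos
    hlamLim_sum hlam_tendsto j W hind hWj
end

section
/- Let λ_1, …, λ_{N+1} > 0 and b_1, …, b_{N+1} > 0, set ρ = Σ_{i=1}^{N+1} λ_i and assume ρ > 1. Let T ≥ 0 and let L_1, …, L_{N+1} : [T, ∞) → ℝ be differentiable functions such that for all t ≥ T: (i) the quantities (b_i/λ_i) L_i(t) are equal for all i (the fluid priorities have equalized), and (ii) Σ_{i=1}^{N+1} L_i'(t) = ρ − 1 (the server works at full rate). Then for every i and every t ≥ T, L_i'(t) = (ρ − 1)(λ_i/b_i)/(Σ_{j=1}^{N+1} λ_j/b_j), and consequently lim_{t → ∞} L_i(t)/t = (ρ − 1)(λ_i/b_i)/(Σ_{j=1}^{N+1} λ_j/b_j). -/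
/-!
Differentiating the equal priorities `(b i / λ i) L i` shows that the derivatives `L' i` are
proportional to `λ i / b i`; the full-rate condition `∑ L' i = ρ - 1` fixes the constant of
proportionality. Each `L i` therefore has a constant derivative on `[T, ∞)`, so it is affine
there and `L i t / t` tends to its slope.
-/

open Filter Topology Finset Set

theorem HasDerivAt.unique_of_eqOn_Ici {F : Type*} [NormedAddCommGroup F] [NormedSpace ℝ F]
    {f g : ℝ → F} {f' g' : F} {T t : ℝ} (hf : HasDerivAt f f' t) (hg : HasDerivAt g g' t)
    (ht : T ≤ t) (hfg : EqOn f g (Ici T)) : f' = g' :=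
  (uniqueDiffOn_Ici T t ht).eq_deriv _ hf.hasDerivWithinAt
    (hg.hasDerivWithinAt.congr (fun _ hs => hfg hs) (hfg ht))

theorem eq_mul_div_sum_of_inv_mul_eq {ι K : Type*} [Fintype ι] [Field K] {c x : ι → K} {s : K}
    (hc : ∀ i, c i ≠ 0) (hsum_c : ∑ j, c j ≠ 0) (heq : ∀ i j, (c i)⁻¹ * x i = (c j)⁻¹ * x j)
    (hsum_x : ∑ j, x j = s) (i : ι) : x i = s * c i / ∑ j, c j := by
  have hx : ∀ j, x j = c j * ((c i)⁻¹ * x i) := fun j => by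
    rw [heq i j, mul_inv_cancel_left₀ (hc j)]
  have hs : s = (∑ j, c j) * ((c i)⁻¹ * x i) := by
    rw [← hsum_x, sum_mul]
    exact sum_congr rfl fun j _ => hx j
  rw [hs, eq_div_iff hsum_c]
  field_simp [hc i]

theorem eq_affine_of_hasDerivAt_const {f : ℝ → ℝ} {c T : ℝ}
    (hf : ∀ t, T ≤ t → HasDerivAt f c t) {t : ℝ} (ht : T ≤ t) :
    f t = f T + c * (t - T) := by
  have haffine : ∀ s, HasDerivAt (fun s => f T + c * (s - T)) c s := fun s => by
    simpa using ((hasDerivAt_id s).sub_const T).const_mul c |>.const_add (f T)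
  refine eq_of_has_deriv_right_eq (a := T) (b := t) (f' := fun _ => c)
    (fun s hs => (hf s hs.1).hasDerivWithinAt) (fun s _ => (haffine s).hasDerivWithinAt)
    (fun s hs => (hf s hs.1).continuousAt.continuousWithinAt)
    (fun s _ => (haffine s).continuousAt.continuousWithinAt) (by simp) t ⟨ht, le_rfl⟩

theorem tendsto_div_id_atTop_of_hasDerivAt_const {f : ℝ → ℝ} {c T : ℝ}
    (hf : ∀ t, T ≤ t → HasDerivAt f c t) : Tendsto (fun t => f t / t) atTop (𝓝 c) := by
  have hlim : Tendsto (fun t : ℝ => (f T - c * T) / t + c) atTop (𝓝 c) := by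
    simpa using (tendsto_const_nhds.div_atTop tendsto_id).add_const c
  refine hlim.congr' ?_
  filter_upwards [eventually_ge_atTop T, eventually_gt_atTop 0] with t hTt ht
  rw [eq_affine_of_hasDerivAt_const hf hTt]
  field_simp
  ring

theorem accumulating_priority_fluid_growth_rate_general
    (N : ℕ) (lam b : Fin (N + 1) → ℝ)
    (hlam : ∀ i, 0 < lam i) (hb : ∀ i, 0 < b i)
    (T : ℝ)
    (L L' : Fin (N + 1) → ℝ → ℝ)
    (hderiv : ∀ i, ∀ t, T ≤ t → HasDerivAt (L i) (L' i t) t)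
    (heq : ∀ t, T ≤ t → ∀ i j, (b i / lam i) * L i t = (b j / lam j) * L j t)
    (hfull : ∀ t, T ≤ t → ∑ i, L' i t = (∑ i, lam i) - 1) :
    ∀ i, (∀ t, T ≤ t →
        L' i t = ((∑ j, lam j) - 1) * (lam i / b i) / ∑ j, lam j / b j) ∧
      Tendsto (fun t => L i t / t) atTop
        (𝓝 (((∑ j, lam j) - 1) * (lam i / b i) / ∑ j, lam j / b j)) := by
  have hpos : ∀ i, 0 < lam i / b i := fun i => div_pos (hlam i) (hb i)
  have hprio : ∀ t, T ≤ t → ∀ i j, (b i / lam i) * L' i t = (b j / lam j) * L' j t :=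
    fun t ht i j => ((hderiv i t ht).const_mul _).unique_of_eqOn_Ici
      ((hderiv j t ht).const_mul _) ht fun s hs => heq s hs i j
  have hrate : ∀ i t, T ≤ t →
      L' i t = ((∑ j, lam j) - 1) * (lam i / b i) / ∑ j, lam j / b j := fun i t ht =>
    eq_mul_div_sum_of_inv_mul_eq (fun j => (hpos j).ne')
      (sum_pos (fun j _ => hpos j) univ_nonempty).ne'
      (by simpa only [inv_div] using hprio t ht) (hfull t ht) i
  exact fun i => ⟨hrate i, tendsto_div_id_atTop_of_hasDerivAt_const fun t ht =>
    hrate i t ht ▸ hderiv i t ht⟩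

/-- **Growth rates of the fluid levels after the priorities equalize.**  Let
`lam i, b i > 0` with `ρ = ∑ i, lam i > 1`, and let `L i` be the fluid level of class
`i`, differentiable on `[T, ∞)` with derivative `L' i`.  If for all `t ≥ T` the fluid
priorities `(b i / lam i) * L i t` are equal across classes and the server works at full
rate, i.e. `∑ i, L' i t = ρ - 1`, then for every class `i` and every `t ≥ T`,
`L' i t = (ρ - 1) * (lam i / b i) / ∑ j, lam j / b j`, and consequently
`L i t / t → (ρ - 1) * (lam i / b i) / ∑ j, lam j / b j` as `t → ∞`. -/
theorem accumulating_priority_fluid_growth_rate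
    (N : ℕ) (lam b : Fin (N + 1) → ℝ)
    (hlam : ∀ i, 0 < lam i) (hb : ∀ i, 0 < b i)
    (hρ : 1 < ∑ i, lam i)
    (T : ℝ) (hT : 0 ≤ T)
    (L L' : Fin (N + 1) → ℝ → ℝ)
    (hderiv : ∀ i, ∀ t, T ≤ t → HasDerivAt (L i) (L' i t) t)
    (heq : ∀ t, T ≤ t → ∀ i j, (b i / lam i) * L i t = (b j / lam j) * L j t)
    (hfull : ∀ t, T ≤ t → ∑ i, L' i t = (∑ i, lam i) - 1) :
    ∀ i, (∀ t, T ≤ t →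
        L' i t = ((∑ j, lam j) - 1) * (lam i / b i) / ∑ j, lam j / b j) ∧
      Tendsto (fun t => L i t / t) atTop
        (𝓝 (((∑ j, lam j) - 1) * (lam i / b i) / ∑ j, lam j / b j)) :=
  accumulating_priority_fluid_growth_rate_general N lam b hlam hb T L L' hderiv heq hfull
end

section
/- Let C, R, λ, μ > 0 with R > C/μ. Call p ∈ [0, 1] an equilibrium joining probability if: (a) whenever p < 1, it is not the case that both pλ < μ and C < R(μ − pλ); and (b) whenever p > 0, both pλ < μ and C ≤ R(μ − pλ) hold. Then p_e = min(1, (μ − C/R)/λ) is an equilibrium joining probability, and it is the unique one; consequently the equilibrium effective arrival rate p_e λ equals λ if λ < μ − C/R and equals μ − C/R otherwise. -/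
/-!
Since `C, R > 0`, a customer strictly prefers joining exactly when the effective arrival rate
`p * lam` is below the critical rate `μ - C / R`, and joining remains a best response exactly
when `p * lam ≤ μ - C / R`; the side condition `p * lam < μ` is then automatic. Dividing by
`lam`, an equilibrium is a `p ∈ [0, 1]` with `p < 1 → a ≤ p` and `0 < p → p ≤ a`, where
`a = (μ - C / R) / lam > 0` because `C / μ < R`, and the only such `p` is `min 1 a`.
-/

/-- `p ∈ [0,1]` is an equilibrium joining probability in the unobservable M/M/1 queue
with waiting cost `C`, service value `R`, potential arrival rate `lam` and service rate
`μ`: (a) if `p < 1` it is not the case that both `p * lam < μ` and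
`C < R * (μ - p * lam)` (no incentive to join more); (b) if `p > 0` then both
`p * lam < μ` and `C ≤ R * (μ - p * lam)` hold (joining is a best response). -/
def IsEquilibriumJoiningProb (C R lam μ p : ℝ) : Prop :=
  p ∈ Set.Icc (0 : ℝ) 1 ∧
  (p < 1 → ¬ (p * lam < μ ∧ C < R * (μ - p * lam))) ∧
  (0 < p → p * lam < μ ∧ C ≤ R * (μ - p * lam))

theorem eq_min_iff_mem_Icc_and_le_of_lt {α : Type*} [LinearOrder α] {lo hi a p : α}
    (hlo : lo ≤ hi) (ha : lo < a) :
    p = min hi a ↔ p ∈ Set.Icc lo hi ∧ (p < hi → a ≤ p) ∧ (lo < p → p ≤ a) := by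
  constructor
  · rintro rfl
    refine ⟨⟨le_min hlo ha.le, min_le_left _ _⟩, fun hp => ?_, fun _ => min_le_right _ _⟩
    rw [min_eq_right (min_lt_iff.1 hp |>.resolve_left (lt_irrefl _)).le]
  · rintro ⟨⟨hp_lo, hp_hi⟩, hjoin, hbalk⟩
    rcases hp_hi.lt_or_eq with hp_hi | rfl
    · have hap := hjoin hp_hi
      rw [min_eq_right (hap.trans hp_hi.le)]
      exact le_antisymm (hbalk (ha.trans_le hap)) hap
    · have hpa : p ≤ a := hp_lo.lt_or_eq.elim hbalk fun h => h ▸ ha.le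
      exact (min_eq_left hpa).symm

section JoiningCondition

variable {K : Type*} [Field K] [LinearOrder K] [IsStrictOrderedRing K] {C R μ x : K}

theorem lt_mul_sub_iff_lt_sub_div (hR : 0 < R) : C < R * (μ - x) ↔ x < μ - C / R := by
  rw [lt_sub_comm, div_lt_iff₀' hR]

theorem le_mul_sub_iff_le_sub_div (hR : 0 < R) : C ≤ R * (μ - x) ↔ x ≤ μ - C / R := by
  rw [le_sub_comm, div_le_iff₀' hR]

theorem lt_and_lt_mul_sub_iff (hC : 0 < C) (hR : 0 < R) :
    x < μ ∧ C < R * (μ - x) ↔ x < μ - C / R := by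
  rw [lt_mul_sub_iff_lt_sub_div hR, and_iff_right_of_imp]
  intro hx
  linarith [div_pos hC hR]

theorem lt_and_le_mul_sub_iff (hC : 0 < C) (hR : 0 < R) :
    x < μ ∧ C ≤ R * (μ - x) ↔ x ≤ μ - C / R := by
  rw [le_mul_sub_iff_le_sub_div hR, and_iff_right_of_imp]
  intro hx
  linarith [div_pos hC hR]

end JoiningCondition

theorem isEquilibriumJoiningProb_iff {C R lam μ p : ℝ} (hC : 0 < C) (hR : 0 < R)
    (hlam : 0 < lam) :
    IsEquilibriumJoiningProb C R lam μ p ↔ p ∈ Set.Icc 0 1 ∧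
      (p < 1 → (μ - C / R) / lam ≤ p) ∧ (0 < p → p ≤ (μ - C / R) / lam) := by
  rw [IsEquilibriumJoiningProb, lt_and_lt_mul_sub_iff hC hR, lt_and_le_mul_sub_iff hC hR,
    div_le_iff₀ hlam, le_div_iff₀ hlam]
  simp only [not_lt]

/-- **The equilibrium joining probability in the unobservable M/M/1 queue.**  Let
`C, R, lam, μ > 0` with `R > C / μ`.  Then `p_e = min 1 ((μ - C / R) / lam)` is an
equilibrium joining probability, it is the unique one, and the equilibrium effective
arrival rate `p_e * lam` equals `lam` if `lam < μ - C / R` and `μ - C / R` otherwise. -/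
theorem mm1_equilibrium_joining_probability
    (C R lam μ : ℝ) (hC : 0 < C) (hR : 0 < R) (hlam : 0 < lam) (hμ : 0 < μ)
    (h : C / μ < R) :
    IsEquilibriumJoiningProb C R lam μ (min 1 ((μ - C / R) / lam)) ∧
    (∀ q, IsEquilibriumJoiningProb C R lam μ q → q = min 1 ((μ - C / R) / lam)) ∧
    (lam < μ - C / R → min 1 ((μ - C / R) / lam) * lam = lam) ∧
    (¬ lam < μ - C / R → min 1 ((μ - C / R) / lam) * lam = μ - C / R) := by
  have hcrit : 0 < (μ - C / R) / lam :=
    div_pos (sub_pos.2 ((div_lt_comm₀ hμ hR).1 h)) hlam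
  have hchar (q : ℝ) :
      IsEquilibriumJoiningProb C R lam μ q ↔ q = min 1 ((μ - C / R) / lam) := by
    rw [isEquilibriumJoiningProb_iff hC hR hlam, eq_min_iff_mem_Icc_and_le_of_lt zero_le_one hcrit]
  have hrate : min 1 ((μ - C / R) / lam) * lam = min lam (μ - C / R) := by
    rw [min_mul_of_nonneg _ _ hlam.le, one_mul, div_mul_cancel₀ _ hlam.ne']
  refine ⟨(hchar _).2 rfl, fun q => (hchar q).1, fun hlt => ?_, fun hge => ?_⟩ <;> rw [hrate]
  · exact min_eq_left hlt.le
  · exact min_eq_right (not_lt.1 hge)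
end
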